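/- arXiv:2303.06922 — 2 statements merged into one kernel-verified Lean document; each statement's English description precedes it below -/
import Mathlib

section
/- For every n ≥ 0, the central trinomial polynomial Γ_n strictly interlaces Γ_{n+1}: both are real-rooted, deg Γ_n ≤ deg Γ_{n+1} ≤ deg Γ_n + 1, and listing their roots in non-increasing order one has r_1(Γ_{n+1}) > r_1(Γ_n) > r_2(Γ_{n+1}) > r_2(Γ_n) > ⋯ (with the convention that a positive constant strictly interlaces any polynomial of degree at most 1 with nonnegative coefficients and positive value, covering the small cases n ≤ 2). -/
/-- `T(n,k) = binom(n,2k) * binom(2k,k)`. -/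
def centralTrinomialEntry (n k : ℕ) : ℕ := n.choose (2 * k) * (2 * k).choose k

/-- The central trinomial polynomial `Γ_n(x) = Σ_{k=0}^{⌊n/2⌋} T(n,k) x^k` over ℝ. -/
noncomputable def centralTrinomialPoly (n : ℕ) : Polynomial ℝ :=
  ∑ k ∈ Finset.range (n / 2 + 1),
    Polynomial.C (centralTrinomialEntry n k : ℝ) * Polynomial.X ^ k

open Polynomial Filter


lemma ctp_coeff (n k : ℕ) :
    (centralTrinomialPoly n).coeff k = (centralTrinomialEntry n k : ℝ) := by
  rw [centralTrinomialPoly, finset_sum_coeff]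
  by_cases h : k ≤ n / 2
  · rw [Finset.sum_eq_single k]
    · simp
    · intro b _ hb
      simp [coeff_C_mul, coeff_X_pow, Ne.symm hb]
    · intro h2; exact absurd (Finset.mem_range.2 (by omega)) h2
  · have h2 : centralTrinomialEntry n k = 0 := by
      have : n < 2 * k := by omega
      simp [centralTrinomialEntry, Nat.choose_eq_zero_of_lt this]
    rw [h2]
    push_cast
    refine Finset.sum_eq_zero fun b hb => ?_
    have hbk : k ≠ b := by simp at hb; omega
    simp [coeff_C_mul, coeff_X_pow, hbk]

lemma ctp_entry_lead_pos (n : ℕ) : 0 < centralTrinomialEntry n (n / 2) := by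
  have h1 : 2 * (n / 2) ≤ n := by omega
  exact Nat.mul_pos (Nat.choose_pos h1) (Nat.choose_pos (by omega))

lemma ctp_natDegree (n : ℕ) : (centralTrinomialPoly n).natDegree = n / 2 := by
  apply le_antisymm
  · rw [natDegree_le_iff_coeff_eq_zero]
    intro m hm
    rw [ctp_coeff]
    have : n < 2 * m := by omega
    simp [centralTrinomialEntry, Nat.choose_eq_zero_of_lt this]
  · apply le_natDegree_of_ne_zero
    rw [ctp_coeff]
    exact_mod_cast (ctp_entry_lead_pos n).ne'

lemma ctp_ne_zero (n : ℕ) : centralTrinomialPoly n ≠ 0 := by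
  intro h
  have := ctp_coeff n 0
  rw [h] at this
  simp [centralTrinomialEntry] at this

lemma ctp_leadingCoeff_pos (n : ℕ) : 0 < (centralTrinomialPoly n).leadingCoeff := by
  rw [leadingCoeff, ctp_natDegree, ctp_coeff]
  exact_mod_cast ctp_entry_lead_pos n

lemma ctp_eval_zero (n : ℕ) : (centralTrinomialPoly n).eval 0 = 1 := by
  have := ctp_coeff n 0
  rw [← coeff_zero_eq_eval_zero, this]
  simp [centralTrinomialEntry]

lemma ctp_rec_nat (n k : ℕ) :
    (n+2) * centralTrinomialEntry (n+2) (k+1) + (n+1) * centralTrinomialEntry n (k+1)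
      = (2*n+3) * centralTrinomialEntry (n+1) (k+1) + 4*(n+1) * centralTrinomialEntry n k := by
  simp only [centralTrinomialEntry, show 2*(k+1) = 2*k+1+1 from by ring]
  have hA : (k+1) * ((2*k+1+1).choose (k+1)) = 2*(2*k+1) * ((2*k).choose k) := by
    have := Nat.succ_mul_centralBinom_succ k
    simpa [Nat.centralBinom, show 2*(k+1) = 2*k+1+1 from by ring] using this
  have hP2 : (n+2).choose (2*k+1+1)
      = n.choose (2*k) + 2 * n.choose (2*k+1) + n.choose (2*k+1+1) := by
    rw [show n+2 = n+1+1 from rfl, Nat.choose_succ_succ (n+1) (2*k+1),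
      Nat.choose_succ_succ n (2*k), Nat.choose_succ_succ n (2*k+1)]
    ring
  have hP1 : (n+1).choose (2*k+1+1) = n.choose (2*k+1) + n.choose (2*k+1+1) :=
    Nat.choose_succ_succ n (2*k+1)
  by_cases hnk : 2*k ≤ n
  · obtain ⟨m, rfl⟩ : ∃ m, n = 2*k + m := ⟨n - 2*k, by omega⟩
    have hv : (2*k+m).choose (2*k+1) * (2*k+1) = (2*k+m).choose (2*k) * m := by
      have := Nat.choose_succ_right_eq (2*k+m) (2*k)
      rwa [show 2*k + m - 2*k = m from by omega] at this
    apply Nat.eq_of_mul_eq_mul_left (show 0 < k+1 by omega)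
    rw [hP2, hP1]
    zify
    zify at hA hv
    push_cast
    linear_combination ((2*(k:ℤ)+(m:ℤ)+2) * (Nat.choose (2*k+m) (2*k) : ℤ) + (Nat.choose (2*k+m) (2*k+1) : ℤ)) * hA + 2*((Nat.choose (2*k) k : ℤ)) * hv
  · have h1 : n.choose (2*k) = 0 := Nat.choose_eq_zero_of_lt (by omega)
    have h2 : n.choose (2*k+1) = 0 := Nat.choose_eq_zero_of_lt (by omega)
    have h3 : n.choose (2*k+1+1) = 0 := Nat.choose_eq_zero_of_lt (by omega)
    rw [hP2, hP1, h1, h2, h3]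
    ring

lemma ctp_rec_nat0 (n : ℕ) :
    (n+2) * centralTrinomialEntry (n+2) 0 + (n+1) * centralTrinomialEntry n 0
      = (2*n+3) * centralTrinomialEntry (n+1) 0 := by
  simp [centralTrinomialEntry]
  omega

lemma ctp_rec (n : ℕ) :
    C ((n:ℝ)+2) * centralTrinomialPoly (n+2)
      = C (2*(n:ℝ)+3) * centralTrinomialPoly (n+1)
        + C ((n:ℝ)+1) * ((C 4 * X - C 1) * centralTrinomialPoly n) := by
  have key : ∀ p : Polynomial ℝ, (C 4 * X - C 1) * p = C 4 * (X * p) - C 1 * p := by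
    intro p; ring
  ext j
  rw [key]
  cases j with
  | zero =>
      simp only [coeff_C_mul, coeff_add, coeff_sub, mul_coeff_zero, coeff_X_zero,
        coeff_C_zero, ctp_coeff]
      have h0 := ctp_rec_nat0 n
      have : ((n:ℝ)+2) * (centralTrinomialEntry (n+2) 0 : ℝ)
          = ((2*(n:ℝ)+3)) * (centralTrinomialEntry (n+1) 0 : ℝ)
            - ((n:ℝ)+1) * (centralTrinomialEntry n 0 : ℝ) := by
        have := congrArg (fun x : ℕ => (x : ℝ)) h0
        push_cast at this
        linarith
      linarith
  | succ j =>
      simp only [coeff_C_mul, coeff_add, coeff_sub, coeff_X_mul, ctp_coeff]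
      have h := ctp_rec_nat n j
      have : ((n:ℝ)+2) * (centralTrinomialEntry (n+2) (j+1) : ℝ)
            + ((n:ℝ)+1) * (centralTrinomialEntry n (j+1) : ℝ)
          = (2*(n:ℝ)+3) * (centralTrinomialEntry (n+1) (j+1) : ℝ)
            + 4*((n:ℝ)+1) * (centralTrinomialEntry n j : ℝ) := by
        exact_mod_cast congrArg (fun x : ℕ => (x : ℝ)) h
      linarith


lemma strictAnti_fin {m : ℕ} {f : Fin m → ℝ}
    (h : ∀ (i : ℕ) (h1 : i + 1 < m), f ⟨i+1, h1⟩ < f ⟨i, by omega⟩) : StrictAnti f := by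
  cases m with
  | zero => intro a; exact a.elim0
  | succ m =>
    rw [Fin.strictAnti_iff_succ_lt]
    intro i
    exact h i (by omega)

lemma roots_eq_of_fin {p : Polynomial ℝ} {d : ℕ} (hp : p ≠ 0) (hdeg : p.natDegree = d)
    {a : Fin d → ℝ} (ha : Function.Injective a) (hz : ∀ i, p.eval (a i) = 0) :
    p.roots = Multiset.map a Finset.univ.val := by
  have hnodup : (Multiset.map a Finset.univ.val).Nodup :=
    Multiset.Nodup.map ha Finset.univ.nodup
  have hle : Multiset.map a Finset.univ.val ≤ p.roots := by
    rw [Multiset.le_iff_subset hnodup]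
    intro x hx
    obtain ⟨i, _, rfl⟩ := Multiset.mem_map.1 hx
    rw [Polynomial.mem_roots hp]
    exact hz i
  refine (Multiset.eq_of_le_of_card_le hle ?_).symm
  rw [Multiset.card_map]
  calc Multiset.card p.roots ≤ p.natDegree := p.card_roots'
  _ = Multiset.card Finset.univ.val := by simp [hdeg]

lemma eq_prod_of_roots {p : Polynomial ℝ} {d : ℕ} (hp : p ≠ 0) (hdeg : p.natDegree = d)
    {a : Fin d → ℝ} (ha : Function.Injective a) (hz : ∀ i, p.eval (a i) = 0) :
    p = C p.leadingCoeff * ∏ i : Fin d, (X - C (a i)) := by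
  have hroots := roots_eq_of_fin hp hdeg ha hz
  have hcard : Multiset.card p.roots = p.natDegree := by
    rw [hroots, Multiset.card_map]; simp [hdeg]
  have h0 := Polynomial.C_leadingCoeff_mul_prod_multiset_X_sub_C hcard
  have h2 : (∏ i : Fin d, (X - C (a i))) = (Multiset.map (fun a => X - C a) p.roots).prod := by
    rw [hroots, Multiset.map_map, Finset.prod_eq_multiset_prod]
    rfl
  rw [h2]
  exact h0.symm

lemma neg_one_pow_card_mul_prod_pos {α : Type*} [DecidableEq α] (s : Finset α) (f : α → ℝ)
    (h : ∀ i ∈ s, f i < 0) : 0 < (-1:ℝ)^s.card * ∏ i ∈ s, f i := by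
  induction s using Finset.induction with
  | empty => simp
  | @insert a s hx ih =>
    rw [Finset.prod_insert hx, Finset.card_insert_of_notMem hx, pow_succ]
    have h1 := ih fun i hi => h i (Finset.mem_insert_of_mem hi)
    have h2 := h a (Finset.mem_insert_self a s)
    nlinarith

lemma sign_eval_prod {d : ℕ} {a : Fin d → ℝ} {c : ℝ} (hc : 0 < c) (x : ℝ) (k : ℕ) (hk : k ≤ d)
    (h1 : ∀ i : Fin d, (i : ℕ) < k → x < a i) (h2 : ∀ i : Fin d, k ≤ (i : ℕ) → a i < x) :
    0 < (-1:ℝ)^k * Polynomial.eval x (C c * ∏ i : Fin d, (X - C (a i))) := by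
  classical
  have heval : Polynomial.eval x (C c * ∏ i : Fin d, (X - C (a i)))
      = c * ∏ i : Fin d, (x - a i) := by
    simp [Polynomial.eval_prod]
  rw [heval]
  set s : Finset (Fin d) := Finset.univ.filter (fun i => (i : ℕ) < k) with hs
  have hscard : s.card = k := by
    have : s = (Finset.range k).attachFin (fun m hm => by
        simp only [Finset.mem_range] at hm; omega) := by
      ext i
      simp [hs, Finset.mem_attachFin]
    rw [this, Finset.card_attachFin, Finset.card_range]
  have hsplit : (∏ i : Fin d, (x - a i))
      = (∏ i ∈ s, (x - a i)) * ∏ i ∈ sᶜ, (x - a i) :=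
    (Finset.prod_mul_prod_compl s _).symm
  have hneg : 0 < (-1:ℝ)^k * ∏ i ∈ s, (x - a i) := by
    rw [← hscard]
    exact neg_one_pow_card_mul_prod_pos s _ fun i hi => by
      have := h1 i (by simpa [hs] using hi)
      linarith
  have hpos : 0 < ∏ i ∈ sᶜ, (x - a i) := by
    apply Finset.prod_pos
    intro i hi
    have : ¬((i : ℕ) < k) := by simpa [hs] using hi
    have := h2 i (by omega)
    linarith
  have key : (-1:ℝ)^k * (c * ((∏ i ∈ s, (x - a i)) * ∏ i ∈ sᶜ, (x - a i)))
      = (((-1:ℝ)^k * ∏ i ∈ s, (x - a i)) * ∏ i ∈ sᶜ, (x - a i)) * c := by ring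
  rw [hsplit, key]
  exact mul_pos (mul_pos hneg hpos) hc

lemma exists_root_between {p : Polynomial ℝ} {x y : ℝ} (hxy : x < y)
    (h : p.eval x * p.eval y < 0) : ∃ z, x < z ∧ z < y ∧ p.eval z = 0 := by
  have hcont : ContinuousOn (fun t => p.eval t) (Set.Icc x y) := p.continuous.continuousOn
  rcases lt_or_ge (p.eval x) 0 with hx | hx
  · have hy : 0 < p.eval y := by nlinarith
    have := intermediate_value_Ioo hxy.le hcont
    obtain ⟨z, hz, hz0⟩ := this (Set.mem_Ioo.2 ⟨hx, hy⟩)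
    exact ⟨z, hz.1, hz.2, hz0⟩
  · have hx' : 0 < p.eval x := by
      rcases hx.lt_or_eq with h' | h'
      · exact h'
      · exfalso; rw [← h'] at h; simp at h
    have hy : p.eval y < 0 := by nlinarith
    have := intermediate_value_Ioo' hxy.le hcont
    obtain ⟨z, hz, hz0⟩ := this (Set.mem_Ioo.2 ⟨hy, hx'⟩)
    exact ⟨z, hz.1, hz.2, hz0⟩

lemma tendsto_sign_atBot {p : Polynomial ℝ} (hlc : 0 < p.leadingCoeff)
    (hdeg : 0 < p.natDegree) :
    Tendsto (fun x => (-1:ℝ)^p.natDegree * p.eval x) atBot atTop := by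
  set n := p.natDegree with hn
  set r : Polynomial ℝ := C ((-1:ℝ)^n) * p.comp (-X) with hr
  have hXdeg : (-X : Polynomial ℝ).natDegree = 1 := by simp
  have hcompdeg : (p.comp (-X)).natDegree = n := by
    rw [Polynomial.natDegree_comp, hXdeg, mul_one]
  have hrdeg : r.natDegree = n := by
    rw [hr, Polynomial.natDegree_C_mul (by positivity), hcompdeg]
  have hone : ((-1:ℝ)^n) * ((-1:ℝ)^n) = 1 := by
    rw [← pow_add]
    exact Even.neg_one_pow ⟨n, rfl⟩
  have hrlc : 0 < r.leadingCoeff := by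
    rw [hr, Polynomial.leadingCoeff_mul, Polynomial.leadingCoeff_C,
      Polynomial.leadingCoeff_comp (by rw [hXdeg]; omega), Polynomial.leadingCoeff_neg,
      Polynomial.leadingCoeff_X]
    calc (0:ℝ) < (((-1)^n) * ((-1)^n)) * p.leadingCoeff := by rw [hone]; linarith
    _ = (-1)^n * (p.leadingCoeff * (-1)^n) := by ring
  have htop : Tendsto (fun y => r.eval y) atTop atTop := by
    apply Polynomial.tendsto_atTop_of_leadingCoeff_nonneg
    · exact Polynomial.natDegree_pos_iff_degree_pos.1 (by rw [hrdeg]; exact hdeg)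
    · exact hrlc.le
  have hcomp : Tendsto (fun x : ℝ => r.eval (-x)) atBot atTop :=
    htop.comp tendsto_neg_atBot_atTop
  have heq : ∀ x : ℝ, r.eval (-x) = (-1:ℝ)^n * p.eval x := by
    intro x
    rw [hr]
    simp [Polynomial.eval_comp]
  refine hcomp.congr fun x => heq x

lemma exists_root_between' {p : Polynomial ℝ} {x y : ℝ} (k : ℕ) (hxy : x < y)
    (hx : 0 < (-1:ℝ)^(k+1) * p.eval x) (hy : 0 < (-1:ℝ)^k * p.eval y) :
    ∃ z, x < z ∧ z < y ∧ p.eval z = 0 := by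
  apply exists_root_between hxy
  have hm : ((-1:ℝ)^(k+1)) * ((-1:ℝ)^k) = -1 := by
    rw [← pow_add]
    exact Odd.neg_one_pow ⟨k, by ring⟩
  have key : p.eval x * p.eval y
      = -((((-1:ℝ)^(k+1)) * p.eval x) * (((-1:ℝ)^k) * p.eval y)) := by
    linear_combination (p.eval x * p.eval y) * hm
  rw [key]
  linarith [mul_pos hx hy]

def CtpInv (n : ℕ) : Prop :=
  ∃ (a : Fin (n/2) → ℝ) (b : Fin ((n+1)/2) → ℝ),
    StrictAnti a ∧ StrictAnti b ∧
    (∀ i, a i < 0) ∧ (∀ i, b i < 0) ∧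
    (∀ i, (centralTrinomialPoly n).eval (a i) = 0) ∧
    (∀ i, (centralTrinomialPoly (n+1)).eval (b i) = 0) ∧
    (∀ (i : ℕ) (hg : i < n/2) (hf : i < (n+1)/2), a ⟨i, hg⟩ < b ⟨i, hf⟩) ∧
    (∀ (i : ℕ) (hg : i < n/2) (hf : i + 1 < (n+1)/2), b ⟨i+1, hf⟩ < a ⟨i, hg⟩)

lemma ctpInv_zero : CtpInv 0 := by
  refine ⟨fun i => (by exact absurd i.2 (by omega) : ℝ), fun i => (by exact absurd i.2 (by omega) : ℝ),
    ?_, ?_, ?_, ?_, ?_, ?_, ?_, ?_⟩ <;>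
  first
  | (intro i; exact absurd i.2 (by omega))
  | (intro i hg hf; omega)
  | (intro i j hij; exact absurd i.2 (by omega))

lemma ctpInv_succ {n : ℕ} (h : CtpInv n) : CtpInv (n+1) := by
  classical
  obtain ⟨a, b, ha, hb, haneg, hbneg, haz, hbz, hab, hba⟩ := h
  have hde : (n+1)/2 ≤ n/2 + 1 := by omega
  have hf : (n+2)/2 = n/2 + 1 := by omega
  -- evaluated recurrence
  have hevrec : ∀ x : ℝ, ((n:ℝ)+2) * (centralTrinomialPoly (n+2)).eval x
      = (2*(n:ℝ)+3) * (centralTrinomialPoly (n+1)).eval x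
        + ((n:ℝ)+1) * ((4*x-1) * (centralTrinomialPoly n).eval x) := by
    intro x
    have := congrArg (Polynomial.eval x) (ctp_rec n)
    simpa using this
  -- product form of Γ n
  have hprod : centralTrinomialPoly n
      = C (centralTrinomialPoly n).leadingCoeff * ∏ i : Fin (n/2), (X - C (a i)) :=
    eq_prod_of_roots (ctp_ne_zero n) (ctp_natDegree n) ha.injective haz
  -- sign of Γ n at the roots of Γ (n+1)
  have hsign_p : ∀ i : Fin ((n+1)/2),
      0 < (-1:ℝ)^(i:ℕ) * (centralTrinomialPoly n).eval (b i) := by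
    intro i
    have h1 : ∀ j : Fin (n/2), (j:ℕ) < (i:ℕ) → b i < a j := by
      intro j hj
      have hfe : (j:ℕ) + 1 < (n+1)/2 := by omega
      have h2 := hba j j.2 hfe
      have h3 : b i ≤ b ⟨(j:ℕ)+1, hfe⟩ := hb.antitone (by simp [Fin.le_def]; omega)
      calc b i ≤ b ⟨(j:ℕ)+1, hfe⟩ := h3
      _ < a ⟨(j:ℕ), j.2⟩ := h2
    have h2 : ∀ j : Fin (n/2), (i:ℕ) ≤ (j:ℕ) → a j < b i := by
      intro j hj
      have hid : (i:ℕ) < n/2 := by omega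
      have h3 : a j ≤ a ⟨(i:ℕ), hid⟩ := ha.antitone (by simp [Fin.le_def]; omega)
      calc a j ≤ a ⟨(i:ℕ), hid⟩ := h3
      _ < b ⟨(i:ℕ), i.2⟩ := hab (i:ℕ) hid i.2
    have := sign_eval_prod (ctp_leadingCoeff_pos n) (b i) (i:ℕ) (by omega) h1 h2
    rwa [← hprod] at this
  -- sign of Γ (n+2) at the roots of Γ (n+1)
  have hsign_r : ∀ i : Fin ((n+1)/2),
      0 < (-1:ℝ)^((i:ℕ)+1) * (centralTrinomialPoly (n+2)).eval (b i) := by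
    intro i
    have hg := hevrec (b i)
    have hq0 : (centralTrinomialPoly (n+1)).eval (b i) = 0 := hbz i
    have heq : ((n:ℝ)+2) * ((-1:ℝ)^((i:ℕ)+1) * (centralTrinomialPoly (n+2)).eval (b i))
        = ((n:ℝ)+1) * (1 - 4 * b i)
          * ((-1:ℝ)^(i:ℕ) * (centralTrinomialPoly n).eval (b i)) := by
      rw [pow_succ]
      linear_combination (-(-1:ℝ)^((i:ℕ))) * hg + (-(-1:ℝ)^((i:ℕ))) * (2*(n:ℝ)+3) * hq0
    have hpos : 0 < ((n:ℝ)+1) * (1 - 4 * b i)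
        * ((-1:ℝ)^(i:ℕ) * (centralTrinomialPoly n).eval (b i)) := by
      have h1 : (0:ℝ) < (n:ℝ)+1 := by positivity
      have h2 : (0:ℝ) < 1 - 4 * b i := by have := hbneg i; linarith
      exact mul_pos (mul_pos h1 h2) (hsign_p i)
    nlinarith
  -- extended point sequence
  set S : ℕ → ℝ := fun i => if h : 0 < i ∧ i ≤ (n+1)/2 then b ⟨i-1, by omega⟩ else 0 with hS
  have hS0 : S 0 = 0 := by simp [hS]
  have hSsucc : ∀ (i : ℕ) (h : i < (n+1)/2), S (i+1) = b ⟨i, h⟩ := by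
    intro i h
    simp only [hS]
    rw [dif_pos ⟨by omega, by omega⟩]
    exact congrArg b (Fin.ext (by simp))
  have hSnonpos : ∀ i, S i ≤ 0 := by
    intro i
    simp only [hS]
    by_cases h : 0 < i ∧ i ≤ (n+1)/2
    · rw [dif_pos h]; exact (hbneg _).le
    · rw [dif_neg h]
  have hSsign : ∀ i : ℕ, i ≤ (n+1)/2 →
      0 < (-1:ℝ)^i * (centralTrinomialPoly (n+2)).eval (S i) := by
    intro i hi
    cases i with
    | zero => rw [hS0]; simp [ctp_eval_zero]
    | succ j =>
      rw [hSsucc j (by omega)]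
      exact hsign_r ⟨j, by omega⟩
  have hSdec : ∀ i : ℕ, i < (n+1)/2 → S (i+1) < S i := by
    intro i hi
    rw [hSsucc i hi]
    cases i with
    | zero => rw [hS0]; exact hbneg _
    | succ j =>
      rw [hSsucc j (by omega)]
      exact hb (by simp [Fin.lt_def])
  -- roots in the gaps
  have H : ∀ i : ℕ, i < (n+1)/2 → ∃ w, S (i+1) < w ∧ w < S i ∧
      (centralTrinomialPoly (n+2)).eval w = 0 := by
    intro i hi
    exact exists_root_between' i (hSdec i hi) (hSsign (i+1) (by omega)) (hSsign i (by omega))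
  choose! zf hz1 hz2 hz3 using H
  -- the extra root (only needed when (n+2)/2 = (n+1)/2 + 1)
  have Hw : ∃ w, ((n+2)/2 = (n+1)/2 + 1 →
      (w < S ((n+1)/2) ∧ (centralTrinomialPoly (n+2)).eval w = 0)) := by
    by_cases hcase : (n+2)/2 = (n+1)/2 + 1
    · have hdeg2 : (centralTrinomialPoly (n+2)).natDegree = (n+2)/2 := ctp_natDegree (n+2)
      have htend := tendsto_sign_atBot (ctp_leadingCoeff_pos (n+2))
        (by rw [hdeg2]; omega)
      rw [hdeg2, hcase] at htend
      obtain ⟨y, hy1, hy2⟩ : ∃ y, y < S ((n+1)/2) ∧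
          0 < (-1:ℝ)^((n+1)/2+1) * (centralTrinomialPoly (n+2)).eval y := by
        have h1 := htend.eventually_gt_atTop 0
        have h2 := eventually_lt_atBot (S ((n+1)/2))
        exact (h2.and h1).exists
      obtain ⟨z, hza, hzb, hzc⟩ :=
        exists_root_between' ((n+1)/2) hy1 hy2 (hSsign ((n+1)/2) le_rfl)
      exact ⟨z, fun _ => ⟨hzb, hzc⟩⟩
    · exact ⟨0, fun hc => absurd hc hcase⟩
  obtain ⟨w, hw⟩ := Hw
  -- assemble the root vector of Γ (n+2)
  set Z : ℕ → ℝ := fun i => if i < (n+1)/2 then zf i else w with hZ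
  have hZgap : ∀ i : ℕ, i < (n+1)/2 → S (i+1) < Z i ∧ Z i < S i := by
    intro i hi
    rw [hZ]; simp only [if_pos hi]
    exact ⟨hz1 i hi, hz2 i hi⟩
  have hZroot : ∀ i : ℕ, i < (n+2)/2 → (centralTrinomialPoly (n+2)).eval (Z i) = 0 := by
    intro i hi
    by_cases h : i < (n+1)/2
    · rw [hZ]; simp only [if_pos h]; exact hz3 i h
    · have h1 : i = (n+1)/2 ∧ (n+2)/2 = (n+1)/2 + 1 := by omega
      rw [hZ]; simp only [if_neg h]
      exact (hw h1.2).2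
  have hZlast : ∀ i : ℕ, ¬(i < (n+1)/2) → i < (n+2)/2 → Z i < S ((n+1)/2) := by
    intro i h hi
    have h1 : (n+2)/2 = (n+1)/2 + 1 := by omega
    rw [hZ]; simp only [if_neg h]
    exact (hw h1).1
  have hZneg : ∀ i : ℕ, i < (n+2)/2 → Z i < 0 := by
    intro i hi
    by_cases h : i < (n+1)/2
    · have := (hZgap i h).2
      have := hSnonpos i
      linarith
    · have := hZlast i h hi
      have := hSnonpos ((n+1)/2)
      linarith
  -- strict anti of Z on the relevant range
  have hZanti : ∀ i : ℕ, i + 1 < (n+2)/2 → Z (i+1) < Z i := by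
    intro i hi
    have hi' : i < (n+1)/2 := by omega
    have h2 := (hZgap i hi').1
    by_cases h : i + 1 < (n+1)/2
    · have h1 := (hZgap (i+1) h).2
      linarith
    · have h3 : i + 1 = (n+1)/2 := by omega
      have h4 := hZlast (i+1) h (by omega)
      rw [← h3] at h4
      linarith
  -- conclude
  refine ⟨b, fun i => Z i, hb, ?_, hbneg, ?_, hbz, ?_, ?_, ?_⟩
  · apply strictAnti_fin
    intro i h1
    exact hZanti i (by omega)
  · intro i
    exact hZneg i i.2
  · intro i
    exact hZroot i i.2
  · intro i hg hf2
    have := (hZgap i hg).1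
    rw [hSsucc i hg] at this
    exact this
  · intro i hg hf2
    by_cases h : i + 1 < (n+1)/2
    · have := (hZgap (i+1) h).2
      rw [hSsucc i hg] at this
      exact this
    · have h3 : i + 1 = (n+1)/2 := by omega
      have h4 := hZlast (i+1) h (by omega)
      have h5 : S ((n+1)/2) = b ⟨i, hg⟩ :=
        (congrArg S h3).symm.trans (hSsucc i hg)
      show Z (i+1) < b ⟨i, hg⟩
      rw [← h5]
      exact h4

lemma ctpInv_all (n : ℕ) : CtpInv n := by
  induction n with
  | zero => exact ctpInv_zero
  | succ n ih => exact ctpInv_succ ih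

/-- `g` strictly interlaces `f`: both are real-rooted,
`deg g ≤ deg f ≤ deg g + 1`, and listing the roots of each polynomial in
(strictly) decreasing order `a` (for `f`) and `b` (for `g`), one has
`r_1(f) > r_1(g) > r_2(f) > r_2(g) > ⋯`.  (When `g` is a constant all of the
interlacing conditions are vacuous, so a constant strictly interlaces any
polynomial of degree at most one, which is the convention for the small cases.) -/
def StrictlyInterlaces (g f : Polynomial ℝ) : Prop :=
  Multiset.card f.roots = f.natDegree ∧
  Multiset.card g.roots = g.natDegree ∧
  g.natDegree ≤ f.natDegree ∧ f.natDegree ≤ g.natDegree + 1 ∧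
  ∃ (a : Fin f.natDegree → ℝ) (b : Fin g.natDegree → ℝ),
    StrictAnti a ∧ StrictAnti b ∧
    f.roots = Multiset.map a Finset.univ.val ∧
    g.roots = Multiset.map b Finset.univ.val ∧
    (∀ (i : ℕ) (hf : i < f.natDegree) (hg : i < g.natDegree), b ⟨i, hg⟩ < a ⟨i, hf⟩) ∧
    (∀ (i : ℕ) (hg : i < g.natDegree) (hf : i + 1 < f.natDegree), a ⟨i + 1, hf⟩ < b ⟨i, hg⟩)

/-- for every `n ≥ 0`, `Γ_n` strictly interlaces `Γ_{n+1}`. -/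
theorem centralTrinomialPoly_strictlyInterlaces_succ (n : ℕ) :
    StrictlyInterlaces (centralTrinomialPoly n) (centralTrinomialPoly (n + 1)) := by
  obtain ⟨a, b, ha, hb, haneg, hbneg, haz, hbz, hab, hba⟩ := ctpInv_all n
  have hdg : (centralTrinomialPoly n).natDegree = n/2 := ctp_natDegree n
  have hdf : (centralTrinomialPoly (n+1)).natDegree = (n+1)/2 := ctp_natDegree (n+1)
  have hrg : (centralTrinomialPoly n).roots = Multiset.map a Finset.univ.val :=
    roots_eq_of_fin (ctp_ne_zero n) hdg ha.injective haz
  have hrf : (centralTrinomialPoly (n+1)).roots = Multiset.map b Finset.univ.val :=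
    roots_eq_of_fin (ctp_ne_zero (n+1)) hdf hb.injective hbz
  refine ⟨?_, ?_, ?_, ?_, ?_⟩
  · rw [hrf, Multiset.card_map, hdf]
    simp
  · rw [hrg, Multiset.card_map, hdg]
    simp
  · rw [hdg, hdf]; omega
  · rw [hdg, hdf]; omega
  · rw [hdg, hdf]
    exact ⟨b, a, hb, ha, hrf, hrg,
      fun i hf2 hg2 => hab i hg2 hf2, fun i hg2 hf2 => hba i hg2 hf2⟩
end

section
/- For all real b, c and every k ≥ 0, the generating function of the k-th column of the triangle [T_{n,k}(b,c)] is given by the Riordan array identity Σ_{n≥0} T_{n,k}(b,c) x^n = S(x) · (x·M(x))^k as formal power series over ℝ, where S(x) = Σ_{n≥0} T_n(b,c) x^n and M(x) = Σ_{n≥0} M_n(b,c) x^n. -/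
/-- The entries `T_{n,k}(b,c) = Σ_{j ≥ 0, k+2j ≤ n} n!/(j! (j+k)! (n−k−2j)!) b^{n−k−2j} c^j`,
the coefficient of `x^k` in the Laurent expansion of `(x + b + c/x)^n`
(and `0` for `k > n`). -/
noncomputable def genCTTriangle (b c : ℝ) (n k : ℕ) : ℝ :=
  ∑ j ∈ Finset.range (n + 1),
    if k + 2 * j ≤ n then
      (n.factorial : ℝ) /
          ((j.factorial : ℝ) * ((j + k).factorial : ℝ) * ((n - k - 2 * j).factorial : ℝ)) *
        b ^ (n - k - 2 * j) * c ^ j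
    else 0

/-- The generalized central trinomial coefficient
`T_n(b,c) = Σ_{k=0}^{⌊n/2⌋} binom(n,2k) binom(2k,k) b^{n−2k} c^k`. -/
noncomputable def genCT (b c : ℝ) (n : ℕ) : ℝ :=
  ∑ k ∈ Finset.range (n / 2 + 1),
    (n.choose (2 * k) : ℝ) * ((2 * k).choose k : ℝ) * b ^ (n - 2 * k) * c ^ k

/-- The generalized Motzkin number
`M_n(b,c) = Σ_{k=0}^{⌊n/2⌋} binom(n,2k) (1/(k+1)) binom(2k,k) b^{n−2k} c^k`. -/
noncomputable def genMotzkin (b c : ℝ) (n : ℕ) : ℝ :=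
  ∑ k ∈ Finset.range (n / 2 + 1),
    (n.choose (2 * k) : ℝ) * (1 / ((k : ℝ) + 1)) * ((2 * k).choose k : ℝ) *
      b ^ (n - 2 * k) * c ^ k


open Finset PowerSeries

/-- Upper-index Vandermonde / hockey-stick: `∑_{i=0}^m C(i,r) C(m-i,s) = C(m+1, r+s+1)`. -/
theorem vand_upper (m : ℕ) : ∀ r s : ℕ,
    ∑ i ∈ range (m+1), (i.choose r) * ((m - i).choose s) = (m+1).choose (r+s+1) := by
  induction m with
  | zero =>
    intro r s
    rw [show (0:ℕ)+1 = 1 from rfl, range_one, sum_singleton, Nat.sub_self]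
    rcases Nat.eq_zero_or_pos r with hr | hr
    · rcases Nat.eq_zero_or_pos s with hs | hs
      · simp [hr, hs]
      · rw [hr, Nat.choose_eq_zero_of_lt hs, mul_zero,
            Nat.choose_eq_zero_of_lt (show 1 < 0+s+1 by omega)]
    · rw [Nat.choose_eq_zero_of_lt hr, zero_mul,
          Nat.choose_eq_zero_of_lt (show 1 < r+s+1 by omega)]
  | succ m ih =>
    intro r s
    rcases Nat.eq_zero_or_pos s with hs | hs
    · subst hs
      simp only [Nat.choose_zero_right, mul_one]
      rw [← Nat.sum_Icc_choose (m+1) r]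
      rw [← Finset.sum_subset (s₁ := Icc r (m+1)) (s₂ := range (m+2))]
      · intro x hx; simp at hx ⊢; omega
      · intro x hx hx'; simp at hx hx'
        exact Nat.choose_eq_zero_of_lt (by omega)
    · obtain ⟨s', rfl⟩ : ∃ s', s = s' + 1 := ⟨s - 1, by omega⟩
      rw [Finset.sum_range_succ]
      have hlast : ((m+1) - (m+1)).choose (s'+1) = 0 := by simp
      rw [hlast, mul_zero, add_zero]
      have step : ∀ i ∈ range (m+1),
          (i.choose r) * (((m+1) - i).choose (s'+1))
            = (i.choose r) * ((m - i).choose (s'+1)) + (i.choose r) * ((m - i).choose s') := by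
        intro i hi
        simp only [mem_range] at hi
        have : (m+1) - i = (m - i) + 1 := by omega
        rw [this, Nat.choose_succ_succ' (m-i) s']
        ring
      rw [Finset.sum_congr rfl step, Finset.sum_add_distrib, ih r (s'+1), ih r s']
      have : r + (s'+1) + 1 = (r + s' + 1) + 1 := by ring
      rw [this, Nat.choose_succ_succ' (m+1) (r+s'+1)]
      omega

/-- Regroup a square double sum into antidiagonals, given vanishing beyond the diagonal. -/
theorem sq_to_antidiag (F : ℕ → ℕ → ℝ) (N : ℕ) (hF : ∀ p q, N ≤ p + q → F p q = 0) :
    ∑ p ∈ range N, ∑ q ∈ range N, F p q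
      = ∑ s ∈ range N, ∑ p ∈ range (s+1), F p (s - p) := by
  have h1 : ∀ s ∈ range N, ∑ p ∈ range (s+1), F p (s - p)
      = ∑ pq ∈ antidiagonal s, F pq.1 pq.2 := fun s _ =>
    (Finset.Nat.sum_antidiagonal_eq_sum_range_succ_mk (fun pq => F pq.1 pq.2) s).symm
  rw [Finset.sum_congr rfl h1]
  rw [← Finset.sum_biUnion (by
    intro s hs t ht hst
    simp only [Function.onFun]
    apply Finset.disjoint_left.mpr
    intro pq h1 h2
    rw [Finset.HasAntidiagonal.mem_antidiagonal] at h1 h2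
    exact hst (by omega))]
  rw [← Finset.sum_product' (s := range N) (t := range N) (f := fun p q => F p q)]
  apply (Finset.sum_subset ?_ ?_).symm
  · intro pq hpq
    simp only [mem_biUnion, mem_range, Finset.HasAntidiagonal.mem_antidiagonal] at hpq
    obtain ⟨s, hs, hpqs⟩ := hpq
    simp only [mem_product, mem_range]
    constructor <;> omega
  · intro pq _ hpq
    simp only [mem_biUnion, mem_range, Finset.HasAntidiagonal.mem_antidiagonal] at hpq
    push_neg at hpq
    exact hF pq.1 pq.2 (by by_contra h; push_neg at h; exact hpq _ h rfl)


theorem catR (n : ℕ) : ((n:ℝ) + 1) * (catalan n : ℝ) = (Nat.centralBinom n : ℝ) := by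
  exact_mod_cast congrArg (Nat.cast : ℕ → ℝ) (succ_mul_catalan_eq_centralBinom n)

/-- Holonomic step in ℝ: `(n+2) catalan(n+1) = 2(2n+1) catalan n`. -/
theorem cat_holo (n : ℕ) :
    ((n:ℝ) + 2) * (catalan (n+1) : ℝ) = 2 * (2*(n:ℝ) + 1) * (catalan n : ℝ) := by
  have h1 : ((n:ℝ) + 2) * (catalan (n+1) : ℝ) = (Nat.centralBinom (n+1) : ℝ) := by
    have := catR (n+1); push_cast at this ⊢; linarith
  have h2 : ((n:ℝ)+1) * (Nat.centralBinom (n+1) : ℝ)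
      = 2 * (2*(n:ℝ)+1) * (Nat.centralBinom n : ℝ) := by
    exact_mod_cast congrArg (Nat.cast : ℕ → ℝ) (Nat.succ_mul_centralBinom_succ n)
  have h3 : (Nat.centralBinom n : ℝ) = ((n:ℝ)+1) * (catalan n : ℝ) := (catR n).symm
  have hn : ((n:ℝ) + 1) ≠ 0 := by positivity
  apply mul_left_cancel₀ hn
  linear_combination ((n:ℝ)+1) * h1 + h2 + 2*(2*(n:ℝ)+1) * h3

/-- `centralBinom j = 2(2j-1) catalan (j-1)` for `j ≥ 1`, in ℝ (shifted form). -/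
theorem cB_eq (j : ℕ) :
    (Nat.centralBinom (j+1) : ℝ) = 2 * (2*(j:ℝ)+1) * (catalan j : ℝ) := by
  have h2 : ((j:ℝ)+1) * (Nat.centralBinom (j+1) : ℝ)
      = 2 * (2*(j:ℝ)+1) * (Nat.centralBinom j : ℝ) := by
    exact_mod_cast congrArg (Nat.cast : ℕ → ℝ) (Nat.succ_mul_centralBinom_succ j)
  have h3 := catR j
  have hn : ((j:ℝ) + 1) ≠ 0 := by positivity
  apply mul_left_cancel₀ hn
  linear_combination h2 - 2*(2*(j:ℝ)+1) * h3

/-- Catalan convolution in ℝ. -/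
theorem cat_conv (s : ℕ) :
    ∑ p ∈ range (s+1), (catalan p : ℝ) * (catalan (s - p) : ℝ) = (catalan (s+1) : ℝ) := by
  rw [catalan_succ' s, Nat.sum_antidiagonal_eq_sum_range_succ_mk]
  push_cast
  rfl

/-- (★): `∑_{i=0}^n catalan i · centralBinom (n−i) = (2n+1) catalan n`, in ℝ. -/
theorem star (n : ℕ) :
    ∑ i ∈ range (n+1), (catalan i : ℝ) * (Nat.centralBinom (n-i) : ℝ)
      = (2*(n:ℝ)+1) * (catalan n : ℝ) := by
  have key : (2:ℝ) * ∑ i ∈ range (n+1), (catalan i : ℝ) * (Nat.centralBinom (n-i) : ℝ)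
      = ((n:ℝ)+2) * (catalan (n+1) : ℝ) := by
    have hrev : ∑ i ∈ range (n+1), (catalan i : ℝ) * (Nat.centralBinom (n-i) : ℝ)
        = ∑ i ∈ range (n+1), (catalan (n-i) : ℝ) * (Nat.centralBinom i : ℝ) := by
      conv_rhs => rw [← Finset.sum_range_reflect
        (fun i => (catalan (n-i) : ℝ) * (Nat.centralBinom i : ℝ)) (n+1)]
      refine Finset.sum_congr rfl fun i hi => ?_
      simp only [mem_range] at hi
      have h1 : n+1-1-i = n-i := by omega
      rw [h1, Nat.sub_sub_self (show i ≤ n by omega)]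
    have expand : ∀ i ∈ range (n+1),
        (catalan i : ℝ) * (Nat.centralBinom (n-i) : ℝ)
          + (catalan (n-i) : ℝ) * (Nat.centralBinom i : ℝ)
        = ((n:ℝ)+2) * ((catalan i : ℝ) * (catalan (n-i) : ℝ)) := by
      intro i hi
      simp only [mem_range] at hi
      rw [← catR (n-i), ← catR i]
      have : ((n:ℝ) - (i:ℝ)) + 1 = ((n - i : ℕ) : ℝ) + 1 := by
        rw [Nat.cast_sub (by omega)]
      push_cast [Nat.cast_sub (show i ≤ n by omega)]
      ring
    have := Finset.sum_congr rfl expand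
    rw [Finset.sum_add_distrib] at this
    rw [two_mul]
    nth_rewrite 2 [hrev]
    rw [this, ← Finset.mul_sum, cat_conv n]
  have := cat_holo n
  linarith


/-- Extend the truncated sum to a longer range. -/
theorem ext_sum (b c : ℝ) (w : ℕ → ℝ) (m K : ℕ) (h : m < 2*K) :
    ∑ p ∈ range (m/2+1), (m.choose (2*p) : ℝ) * w p * b^(m-2*p) * c^p
      = ∑ p ∈ range K, (m.choose (2*p) : ℝ) * w p * b^(m-2*p) * c^p := by
  apply Finset.sum_subset
  · intro x hx; simp only [mem_range] at hx ⊢; omega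
  · intro x _ hx
    simp only [mem_range] at hx
    rw [Nat.choose_eq_zero_of_lt (by omega), Nat.cast_zero, zero_mul, zero_mul, zero_mul]

/-- Master convolution lemma. -/
theorem conv_master (b c : ℝ) (u v : ℕ → ℝ) (n : ℕ) :
    ∑ i ∈ range (n+1),
      (∑ p ∈ range (i/2+1), (i.choose (2*p) : ℝ) * u p * b^(i-2*p) * c^p) *
      (∑ q ∈ range ((n-i)/2+1), ((n-i).choose (2*q) : ℝ) * v q * b^(n-i-2*q) * c^q)
    = ∑ s ∈ range (n+1), ((n+1).choose (2*s+1) : ℝ) *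
        (∑ p ∈ range (s+1), u p * v (s-p)) * b^(n-2*s) * c^s := by
  have step1 : ∀ i ∈ range (n+1),
      (∑ p ∈ range (i/2+1), (i.choose (2*p) : ℝ) * u p * b^(i-2*p) * c^p) *
      (∑ q ∈ range ((n-i)/2+1), ((n-i).choose (2*q) : ℝ) * v q * b^(n-i-2*q) * c^q)
      = ∑ p ∈ range (n+1), ∑ q ∈ range (n+1),
          ((i.choose (2*p) : ℝ) * ((n-i).choose (2*q) : ℝ)) * (u p * v q)
            * b^(n-2*(p+q)) * c^(p+q) := by
    intro i hi
    simp only [mem_range] at hi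
    rw [ext_sum b c u i (n+1) (by omega), ext_sum b c v (n-i) (n+1) (by omega),
      Finset.sum_mul_sum]
    refine Finset.sum_congr rfl fun p _ => Finset.sum_congr rfl fun q _ => ?_
    by_cases h1 : 2*p ≤ i
    · by_cases h2 : 2*q ≤ n - i
      · have hb : b^(i-2*p) * b^(n-i-2*q) = b^(n-2*(p+q)) := by
          rw [← pow_add]; congr 1; omega
        have hc : c^p * c^q = c^(p+q) := by rw [← pow_add]
        calc (i.choose (2*p) : ℝ) * u p * b^(i-2*p) * c^p *
              (((n-i).choose (2*q) : ℝ) * v q * b^(n-i-2*q) * c^q)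
            = ((i.choose (2*p) : ℝ) * ((n-i).choose (2*q) : ℝ)) * (u p * v q)
                * (b^(i-2*p) * b^(n-i-2*q)) * (c^p * c^q) := by ring
          _ = _ := by rw [hb, hc]
      · rw [Nat.choose_eq_zero_of_lt (by omega : n-i < 2*q)]
        simp
    · rw [Nat.choose_eq_zero_of_lt (by omega : i < 2*p)]
      simp
  rw [Finset.sum_congr rfl step1]
  rw [Finset.sum_comm]
  have step2 : ∀ p ∈ range (n+1),
      ∑ i ∈ range (n+1), ∑ q ∈ range (n+1),
        ((i.choose (2*p) : ℝ) * ((n-i).choose (2*q) : ℝ)) * (u p * v q)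
          * b^(n-2*(p+q)) * c^(p+q)
      = ∑ q ∈ range (n+1),
          ((n+1).choose (2*p+2*q+1) : ℝ) * (u p * v q) * b^(n-2*(p+q)) * c^(p+q) := by
    intro p _
    rw [Finset.sum_comm]
    refine Finset.sum_congr rfl fun q _ => ?_
    rw [← Finset.sum_mul, ← Finset.sum_mul, ← Finset.sum_mul]
    congr 1; congr 1; congr 1
    have := vand_upper n (2*p) (2*q)
    exact_mod_cast congrArg (Nat.cast : ℕ → ℝ) this
  rw [Finset.sum_congr rfl step2]
  rw [sq_to_antidiag (fun p q => ((n+1).choose (2*p+2*q+1) : ℝ) * (u p * v q)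
      * b^(n-2*(p+q)) * c^(p+q)) (n+1)
    (by
      intro p q h
      rw [Nat.choose_eq_zero_of_lt (by omega : n+1 < 2*p+2*q+1), Nat.cast_zero,
        zero_mul, zero_mul, zero_mul])]
  refine Finset.sum_congr rfl fun s hs => ?_
  have hterm : ∀ p ∈ range (s+1),
      ((n+1).choose (2*p+2*(s-p)+1) : ℝ) * (u p * v (s-p)) * b^(n-2*(p+(s-p))) * c^(p+(s-p))
        = ((n+1).choose (2*s+1) : ℝ) * (u p * v (s-p)) * b^(n-2*s) * c^s := by
    intro p hp
    simp only [mem_range] at hp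
    have hps : p + (s - p) = s := by omega
    rw [show 2*p+2*(s-p)+1 = 2*(p+(s-p))+1 by ring, hps]
  conv_rhs => rw [Finset.mul_sum, Finset.sum_mul, Finset.sum_mul]
  exact Finset.sum_congr rfl hterm


theorem key_step (b c : ℝ) (w g : ℕ → ℝ) (e : ℝ)
    (hconv : ∀ s, ∑ p ∈ range (s+1), (catalan p : ℝ) * w (s-p) = g s)
    (hshift : ∀ j, w (j+1) = e * g j) (m : ℕ) :
    (∑ p ∈ range ((m+2)/2+1), ((m+2).choose (2*p) : ℝ) * w p * b^(m+2-2*p) * c^p)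
    = b * (∑ p ∈ range ((m+1)/2+1), ((m+1).choose (2*p) : ℝ) * w p * b^(m+1-2*p) * c^p)
      + e * c * ∑ i ∈ range (m+1),
          (∑ p ∈ range (i/2+1), (i.choose (2*p) : ℝ) * (catalan p : ℝ) * b^(i-2*p) * c^p) *
          (∑ q ∈ range ((m-i)/2+1), ((m-i).choose (2*q) : ℝ) * w q * b^(m-i-2*q) * c^q) := by
  rw [conv_master b c (fun p => (catalan p : ℝ)) w m]
  have hg : ∀ s ∈ range (m+1),
      ((m+1).choose (2*s+1) : ℝ) * (∑ p ∈ range (s+1), (catalan p : ℝ) * w (s-p))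
          * b^(m-2*s) * c^s
      = ((m+1).choose (2*s+1) : ℝ) * g s * b^(m-2*s) * c^s := by
    intro s _; rw [hconv s]
  rw [Finset.sum_congr rfl hg]
  -- extend the conv sum from range (m+1) to range (m+3)
  have hext : ∑ s ∈ range (m+1), ((m+1).choose (2*s+1) : ℝ) * g s * b^(m-2*s) * c^s
      = ∑ s ∈ range (m+3), ((m+1).choose (2*s+1) : ℝ) * g s * b^(m-2*s) * c^s := by
    apply Finset.sum_subset
    · intro x hx; simp only [mem_range] at hx ⊢; omega
    · intro x _ hx
      simp only [mem_range] at hx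
      rw [Nat.choose_eq_zero_of_lt (by omega), Nat.cast_zero, zero_mul, zero_mul, zero_mul]
  rw [hext]
  -- shift index: sum over range (m+4) with a vanishing 0-th term
  have hshiftsum : ∑ s ∈ range (m+3), ((m+1).choose (2*s+1) : ℝ) * g s * b^(m-2*s) * c^s
      = ∑ j ∈ range (m+4), (if j = 0 then 0 else
          ((m+1).choose (2*(j-1)+1) : ℝ) * g (j-1) * b^(m-2*(j-1)) * c^(j-1)) := by
    rw [Finset.sum_range_succ' (fun j => (if j = 0 then 0 else
          ((m+1).choose (2*(j-1)+1) : ℝ) * g (j-1) * b^(m-2*(j-1)) * c^(j-1))) (m+3)]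
    simp only [Nat.succ_ne_zero, if_false, Nat.add_sub_cancel, if_true, add_zero]
  rw [hshiftsum]
  rw [ext_sum b c w (m+2) (m+4) (by omega), ext_sum b c w (m+1) (m+4) (by omega)]
  rw [Finset.mul_sum, Finset.mul_sum, ← Finset.sum_add_distrib]
  refine Finset.sum_congr rfl fun j hj => ?_
  rcases j with _ | j'
  · rw [if_pos rfl]
    simp only [mul_zero, add_zero, Nat.mul_zero, Nat.sub_zero, pow_zero,
      Nat.choose_zero_right, Nat.cast_one, one_mul, mul_one]
    rw [pow_succ]
    ring
  · simp only [Nat.succ_ne_zero, if_false, Nat.add_sub_cancel]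
    have pascal : (((m+2)).choose (2*(j'+1)) : ℝ)
        = ((m+1).choose (2*j'+1) : ℝ) + ((m+1).choose (2*(j'+1)) : ℝ) := by
      have : (m+2).choose (2*j'+1+1) = (m+1).choose (2*j'+1) + (m+1).choose (2*j'+1+1) :=
        Nat.choose_succ_succ' (m+1) (2*j'+1)
      rw [show 2*(j'+1) = 2*j'+1+1 by ring]
      exact_mod_cast congrArg (Nat.cast : ℕ → ℝ) this
    rw [pascal, hshift j']
    have he1 : m+2-2*(j'+1) = m - 2*j' := by omega
    rw [he1]
    have hc : c^(j'+1) = c^(j') * c := pow_succ c j'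
    rw [hc]
    by_cases hb : 2*(j'+1) ≤ m+1
    · have he2 : b^(m+1-2*(j'+1)) * b = b^(m-2*j') := by
        rw [← pow_succ]; congr 1; omega
      linear_combination (-(((m+1).choose (2*(j'+1)) : ℝ)) * (e * g j') * (c^(j') * c)) * he2
    · rw [Nat.choose_eq_zero_of_lt (show m+1 < 2*(j'+1) by omega)]
      push_cast
      ring


theorem fact_ne (t : ℕ) : ((t.factorial : ℝ)) ≠ 0 := by
  exact_mod_cast t.factorial_ne_zero

theorem scale_div (A D α : ℝ) (hD : D ≠ 0) (hα : α ≠ 0) : A / D = α * (A / (α * D)) := by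
  field_simp

/-- single term of the triangle -/
noncomputable def Tterm (b c : ℝ) (n k j : ℕ) : ℝ :=
  if k + 2 * j ≤ n then
    (n.factorial : ℝ) /
        ((j.factorial : ℝ) * ((j + k).factorial : ℝ) * ((n - k - 2 * j).factorial : ℝ)) *
      b ^ (n - k - 2 * j) * c ^ j
  else 0

theorem genCTTriangle_eq (b c : ℝ) (n k : ℕ) :
    genCTTriangle b c n k = ∑ j ∈ range (n+1), Tterm b c n k j := rfl

theorem Tterm_ext (b c : ℝ) (n k : ℕ) {K : ℕ} (h : n + 1 ≤ K) :
    genCTTriangle b c n k = ∑ j ∈ range K, Tterm b c n k j := by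
  rw [genCTTriangle_eq]
  apply Finset.sum_subset
  · intro x hx; simp only [mem_range] at hx ⊢; omega
  · intro x hx hx'
    simp only [mem_range] at hx hx'
    rw [Tterm, if_neg (by omega)]

/-- value of a Tterm with explicit data, for rewriting -/
theorem Tterm_pos (b c : ℝ) {n k j : ℕ} (h : k + 2*j ≤ n) (m : ℕ) (hm : m = n - k - 2*j) :
    Tterm b c n k j
      = (n.factorial : ℝ) /
          ((j.factorial : ℝ) * ((j + k).factorial : ℝ) * (m.factorial : ℝ)) * b ^ m * c ^ j := by
  rw [Tterm, if_pos h, hm]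

theorem Tterm_neg (b c : ℝ) {n k j : ℕ} (h : ¬ (k + 2*j ≤ n)) : Tterm b c n k j = 0 := by
  rw [Tterm, if_neg h]

/-- The key multinomial 3-term identity, termwise. -/
theorem Tterm_rec (b c : ℝ) (n k j : ℕ) :
    Tterm b c (n+1) (k+1) j
      = Tterm b c n k j + b * Tterm b c n (k+1) j
        + (if j = 0 then 0 else c * Tterm b c n (k+2) (j-1)) := by
  by_cases hg : k + 2*j ≤ n
  case neg =>
    rw [Tterm_neg b c (show ¬((k+1) + 2*j ≤ n+1) by omega),
        Tterm_neg b c (show ¬(k + 2*j ≤ n) from hg),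
        Tterm_neg b c (show ¬((k+1) + 2*j ≤ n) by omega)]
    by_cases hj : j = 0
    · rw [if_pos hj]; ring
    · rw [if_neg hj, Tterm_neg b c (show ¬((k+2) + 2*(j-1) ≤ n) by omega)]; ring
  case pos =>
  set m := n - k - 2*j with hm
  -- the common denominator
  set D : ℝ := (j.factorial : ℝ) * (((j+k)+1).factorial : ℝ) * (m.factorial : ℝ) with hD
  have hDne : D ≠ 0 := by
    simp only [hD]
    exact mul_ne_zero (mul_ne_zero (fact_ne j) (fact_ne ((j+k)+1))) (fact_ne m)
  have hjk : (((j+k)+1).factorial : ℝ) = ((j:ℝ)+(k:ℝ)+1) * ((j+k).factorial : ℝ) := by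
    rw [Nat.factorial_succ]; push_cast; ring
  -- LHS
  have hL : Tterm b c (n+1) (k+1) j
      = ((n:ℝ)+1) * ((n.factorial : ℝ) / D) * b ^ m * c ^ j := by
    rw [Tterm_pos b c (show (k+1) + 2*j ≤ n+1 by omega) m (by omega)]
    rw [show j + (k+1) = (j+k)+1 by omega, Nat.factorial_succ (n), hD]
    push_cast
    rw [mul_div_assoc]
  -- first RHS term
  have hT1 : Tterm b c n k j
      = ((j:ℝ)+(k:ℝ)+1) * ((n.factorial : ℝ) / D) * b ^ m * c ^ j := by
    rw [Tterm_pos b c hg m hm]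
    congr 1; congr 1
    rw [scale_div (n.factorial : ℝ)
        ((j.factorial : ℝ) * (((j+k)).factorial : ℝ) * (m.factorial : ℝ))
        ((j:ℝ)+(k:ℝ)+1)
        (mul_ne_zero (mul_ne_zero (fact_ne j) (fact_ne (j+k))) (fact_ne m))
        (by positivity)]
    congr 2
    rw [hD, hjk]; ring
  -- second RHS term
  have hT2 : b * Tterm b c n (k+1) j = (m:ℝ) * ((n.factorial : ℝ) / D) * b ^ m * c ^ j := by
    by_cases hmz : (k+1) + 2*j ≤ n
    · have hm1 : m = (m-1)+1 := by omega
      rw [Tterm_pos b c hmz (m-1) (by omega)]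
      rw [show j + (k+1) = (j+k)+1 by omega]
      have hmm : ((m-1:ℕ):ℝ) + 1 = (m:ℝ) := by
        have h9 : m - 1 + 1 = m := by omega
        exact_mod_cast congrArg (Nat.cast : ℕ → ℝ) h9
      have hmfac : ((m-1).factorial : ℝ) * (m:ℝ) = (m.factorial : ℝ) := by
        rw [congrArg Nat.factorial hm1, Nat.factorial_succ]
        push_cast
        rw [hmm]
        ring
      have hbm : b ^ m = b^(m-1) * b := by rw [← pow_succ, ← hm1]
      have hmne : (m:ℝ) ≠ 0 := by
        have : m ≠ 0 := by omega
        exact_mod_cast this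
      rw [hbm]
      rw [scale_div (n.factorial : ℝ)
          ((j.factorial : ℝ) * (((j+k)+1).factorial : ℝ) * ((m-1).factorial : ℝ))
          (m:ℝ)
          (mul_ne_zero (mul_ne_zero (fact_ne j) (fact_ne ((j+k)+1))) (fact_ne (m-1)))
          hmne]
      rw [show (m:ℝ) * ((j.factorial : ℝ) * (((j+k)+1).factorial : ℝ) * ((m-1).factorial : ℝ))
          = D by rw [hD, ← hmfac]; ring]
      ring
    · have hm0 : m = 0 := by omega
      rw [Tterm_neg b c hmz, hm0]
      simp
  -- third RHS term
  have hT3 : (if j = 0 then 0 else c * Tterm b c n (k+2) (j-1))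
      = (j:ℝ) * ((n.factorial : ℝ) / D) * b ^ m * c ^ j := by
    by_cases hj : j = 0
    · rw [if_pos hj, hj]; simp
    · rw [if_neg hj]
      obtain ⟨j', rfl⟩ : ∃ j', j = j'+1 := ⟨j-1, by omega⟩
      rw [Nat.add_sub_cancel]
      rw [Tterm_pos b c (show (k+2) + 2*j' ≤ n by omega) m (by omega)]
      rw [show j' + (k+2) = ((j'+1)+k)+1 by omega]
      have hjfac : ((j'+1).factorial : ℝ) = ((j':ℝ)+1) * ((j').factorial : ℝ) := by
        rw [Nat.factorial_succ]; push_cast; ring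
      have hcj : c ^ (j'+1) = c^(j') * c := pow_succ c j'
      rw [hcj]
      rw [scale_div (n.factorial : ℝ)
          ((j'.factorial : ℝ) * ((((j'+1)+k)+1).factorial : ℝ) * (m.factorial : ℝ))
          ((j':ℝ)+1)
          (mul_ne_zero (mul_ne_zero (fact_ne j') (fact_ne (((j'+1)+k)+1))) (fact_ne m))
          (by positivity)]
      rw [show ((j':ℝ)+1) * ((j'.factorial : ℝ) * ((((j'+1)+k)+1).factorial : ℝ) * (m.factorial : ℝ))
          = D by rw [hD, hjfac]; ring]
      push_cast
      ring
  rw [hL, hT1, hT2, hT3]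
  have h1 : ((n:ℝ)+1) = ((j:ℝ)+(k:ℝ)+1) + (m:ℝ) + (j:ℝ) := by
    have : n+1 = ((j+k)+1) + m + j := by omega
    exact_mod_cast congrArg (Nat.cast : ℕ → ℝ) this
  rw [h1]
  ring


/-- Termwise recurrence in the `k = 0` column. -/
theorem Tterm_rec0 (b c : ℝ) (n j : ℕ) :
    Tterm b c (n+1) 0 j
      = b * Tterm b c n 0 j + (if j = 0 then 0 else 2 * c * Tterm b c n 1 (j-1)) := by
  by_cases hg : 2*j ≤ n+1
  case neg =>
    rw [Tterm_neg b c (show ¬(0 + 2*j ≤ n+1) by omega),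
        Tterm_neg b c (show ¬(0 + 2*j ≤ n) by omega)]
    by_cases hj : j = 0
    · rw [if_pos hj]; ring
    · rw [if_neg hj, Tterm_neg b c (show ¬(1 + 2*(j-1) ≤ n) by omega)]; ring
  case pos =>
  set m := n + 1 - 2*j with hm
  set D : ℝ := (j.factorial : ℝ) * (j.factorial : ℝ) * (m.factorial : ℝ) with hD
  have hDne : D ≠ 0 :=
    mul_ne_zero (mul_ne_zero (fact_ne j) (fact_ne j)) (fact_ne m)
  have hL : Tterm b c (n+1) 0 j = ((n:ℝ)+1) * ((n.factorial : ℝ) / D) * b ^ m * c ^ j := by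
    rw [Tterm_pos b c (show 0 + 2*j ≤ n+1 by omega) m (by omega)]
    rw [Nat.add_zero j, Nat.factorial_succ n, hD]
    push_cast
    rw [mul_div_assoc]
  have hT1 : b * Tterm b c n 0 j = (m:ℝ) * ((n.factorial : ℝ) / D) * b ^ m * c ^ j := by
    by_cases hmz : 0 + 2*j ≤ n
    · have hm1 : m = (m-1)+1 := by omega
      rw [Tterm_pos b c hmz (m-1) (by omega), Nat.add_zero j]
      have hmm : ((m-1:ℕ):ℝ) + 1 = (m:ℝ) := by
        have h9 : m - 1 + 1 = m := by omega
        exact_mod_cast congrArg (Nat.cast : ℕ → ℝ) h9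
      have hmfac : ((m-1).factorial : ℝ) * (m:ℝ) = (m.factorial : ℝ) := by
        rw [congrArg Nat.factorial hm1, Nat.factorial_succ]
        push_cast
        rw [hmm]; ring
      have hbm : b ^ m = b^(m-1) * b := by rw [← pow_succ, ← hm1]
      have hmne : (m:ℝ) ≠ 0 := by
        have : m ≠ 0 := by omega
        exact_mod_cast this
      rw [hbm]
      rw [scale_div (n.factorial : ℝ)
          ((j.factorial : ℝ) * (j.factorial : ℝ) * ((m-1).factorial : ℝ)) (m:ℝ)
          (mul_ne_zero (mul_ne_zero (fact_ne j) (fact_ne j)) (fact_ne (m-1))) hmne]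
      rw [show (m:ℝ) * ((j.factorial : ℝ) * (j.factorial : ℝ) * ((m-1).factorial : ℝ))
          = D by rw [hD, ← hmfac]; ring]
      ring
    · have hm0 : m = 0 := by omega
      rw [Tterm_neg b c hmz, hm0]
      simp
  have hT3 : (if j = 0 then 0 else 2 * c * Tterm b c n 1 (j-1))
      = 2 * (j:ℝ) * ((n.factorial : ℝ) / D) * b ^ m * c ^ j := by
    by_cases hj : j = 0
    · rw [if_pos hj, hj]; simp
    · rw [if_neg hj]
      obtain ⟨j', rfl⟩ : ∃ j', j = j'+1 := ⟨j-1, by omega⟩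
      rw [Nat.add_sub_cancel]
      rw [Tterm_pos b c (show 1 + 2*j' ≤ n by omega) m (by omega)]
      rw [show j' + 1 = j' + 1 from rfl]
      have hjfac : ((j'+1).factorial : ℝ) = ((j':ℝ)+1) * ((j').factorial : ℝ) := by
        rw [Nat.factorial_succ]; push_cast; ring
      have hcj : c ^ (j'+1) = c^(j') * c := pow_succ c j'
      rw [hcj]
      rw [scale_div (n.factorial : ℝ)
          ((j'.factorial : ℝ) * ((j'+1).factorial : ℝ) * (m.factorial : ℝ)) ((j':ℝ)+1)
          (mul_ne_zero (mul_ne_zero (fact_ne j') (fact_ne (j'+1))) (fact_ne m))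
          (by positivity)]
      rw [show ((j':ℝ)+1) * ((j'.factorial : ℝ) * ((j'+1).factorial : ℝ) * (m.factorial : ℝ))
          = D by rw [hD, hjfac]; ring]
      push_cast
      ring
  rw [hL, hT1, hT3]
  have h1 : ((n:ℝ)+1) = (m:ℝ) + 2*(j:ℝ) := by
    have : n+1 = m + 2*j := by omega
    exact_mod_cast congrArg (Nat.cast : ℕ → ℝ) this
  rw [h1]
  ring

/-- Sum-level triangle recurrence, `k ≥ 1`. -/
theorem TL1 (b c : ℝ) (n k : ℕ) :
    genCTTriangle b c (n+1) (k+1)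
      = genCTTriangle b c n k + b * genCTTriangle b c n (k+1)
        + c * genCTTriangle b c n (k+2) := by
  rw [Tterm_ext b c (n+1) (k+1) (le_refl (n+2)),
      Tterm_ext b c n k (show n+1 ≤ n+2 by omega),
      Tterm_ext b c n (k+1) (show n+1 ≤ n+2 by omega),
      Tterm_ext b c n (k+2) (show n+1 ≤ n+1 from le_refl _)]
  have hshift : c * ∑ j ∈ range (n+1), Tterm b c n (k+2) j
      = ∑ j ∈ range (n+2), (if j = 0 then 0 else c * Tterm b c n (k+2) (j-1)) := by
    rw [Finset.sum_range_succ' (fun j => (if j = 0 then 0 else c * Tterm b c n (k+2) (j-1)))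
        (n+1)]
    simp only [Nat.succ_ne_zero, if_false, Nat.add_sub_cancel, if_true, add_zero,
      Finset.mul_sum]
  rw [hshift, Finset.mul_sum, ← Finset.sum_add_distrib, ← Finset.sum_add_distrib]
  exact Finset.sum_congr rfl fun j _ => Tterm_rec b c n k j

/-- Sum-level triangle recurrence, `k = 0`. -/
theorem TL2 (b c : ℝ) (n : ℕ) :
    genCTTriangle b c (n+1) 0
      = b * genCTTriangle b c n 0 + 2 * c * genCTTriangle b c n 1 := by
  rw [Tterm_ext b c (n+1) 0 (le_refl (n+2)),
      Tterm_ext b c n 0 (show n+1 ≤ n+2 by omega),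
      Tterm_ext b c n 1 (show n+1 ≤ n+1 from le_refl _)]
  have hshift : 2 * c * ∑ j ∈ range (n+1), Tterm b c n 1 j
      = ∑ j ∈ range (n+2), (if j = 0 then 0 else 2 * c * Tterm b c n 1 (j-1)) := by
    rw [Finset.sum_range_succ' (fun j => (if j = 0 then 0 else 2 * c * Tterm b c n 1 (j-1)))
        (n+1)]
    simp only [Nat.succ_ne_zero, if_false, Nat.add_sub_cancel, if_true, add_zero,
      Finset.mul_sum]
  rw [hshift, Finset.mul_sum, ← Finset.sum_add_distrib]
  exact Finset.sum_congr rfl fun j _ => Tterm_rec0 b c n j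

/-- Row 0 of the triangle. -/
theorem triangle_row0 (b c : ℝ) (k : ℕ) :
    genCTTriangle b c 0 k = if k = 0 then 1 else 0 := by
  rw [genCTTriangle_eq, range_one, sum_singleton]
  by_cases hk : k = 0
  · rw [if_pos hk, hk, Tterm, if_pos (by omega)]
    norm_num
  · rw [if_neg hk, Tterm_neg b c (by omega)]

/-- Column 0 of the triangle is the central coefficient sequence. -/
theorem triangle_col0 (b c : ℝ) (n : ℕ) :
    genCTTriangle b c n 0 = genCT b c n := by
  rw [genCTTriangle_eq, genCT]
  rw [Finset.sum_subset (show range (n/2+1) ⊆ range (n+1) by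
      intro x hx; simp only [mem_range] at hx ⊢; omega)
    (by
      intro x hx hx'
      simp only [mem_range] at hx hx'
      rw [Nat.choose_eq_zero_of_lt (show n < 2*x by omega), Nat.cast_zero, zero_mul,
        zero_mul, zero_mul])]
  refine Finset.sum_congr rfl fun j hj => ?_
  by_cases hg : 2*j ≤ n
  · rw [Tterm_pos b c (show 0 + 2*j ≤ n by omega) (n - 2*j) (by omega), Nat.add_zero]
    have hDne : ((j.factorial : ℝ) * (j.factorial : ℝ) * ((n-2*j).factorial : ℝ)) ≠ 0 :=
      mul_ne_zero (mul_ne_zero (fact_ne j) (fact_ne j)) (fact_ne (n-2*j))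
    have H1 : ((2*j).factorial : ℝ)
        = ((2*j).choose j : ℝ) * (j.factorial : ℝ) * (j.factorial : ℝ) := by
      have := Nat.choose_mul_factorial_mul_factorial (show j ≤ 2*j by omega)
      rw [show 2*j - j = j by omega] at this
      exact_mod_cast (congrArg (Nat.cast : ℕ → ℝ) this).symm
    have H2 : (n.factorial : ℝ)
        = (n.choose (2*j) : ℝ) * ((2*j).factorial : ℝ) * ((n-2*j).factorial : ℝ) := by
      have := Nat.choose_mul_factorial_mul_factorial hg
      exact_mod_cast (congrArg (Nat.cast : ℕ → ℝ) this).symm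
    congr 1; congr 1
    rw [div_eq_iff hDne, H2, H1]
    ring
  · rw [Tterm_neg b c (by omega),
      Nat.choose_eq_zero_of_lt (show n < 2*j by omega), Nat.cast_zero, zero_mul,
      zero_mul, zero_mul]


theorem genMotzkin_shape (b c : ℝ) (n : ℕ) :
    genMotzkin b c n
      = ∑ p ∈ range (n/2+1), (n.choose (2*p) : ℝ) * (catalan p : ℝ) * b^(n-2*p) * c^p := by
  refine Finset.sum_congr rfl fun p _ => ?_
  have hne : ((p:ℝ)+1) ≠ 0 := by positivity
  have hcat : (catalan p : ℝ) = (1 / ((p:ℝ)+1)) * ((2*p).choose p : ℝ) := by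
    have h := catR p
    rw [Nat.centralBinom] at h
    field_simp
    linarith
  rw [hcat]
  ring

theorem genCT_shape (b c : ℝ) (n : ℕ) :
    genCT b c n
      = ∑ p ∈ range (n/2+1),
          (n.choose (2*p) : ℝ) * (Nat.centralBinom p : ℝ) * b^(n-2*p) * c^p := rfl

theorem mot_zero (b c : ℝ) : genMotzkin b c 0 = 1 := by
  simp [genMotzkin]

theorem ct_zero (b c : ℝ) : genCT b c 0 = 1 := by
  simp [genCT]

theorem mot_one (b c : ℝ) : genMotzkin b c 1 = b := by
  simp [genMotzkin]

theorem ct_one (b c : ℝ) : genCT b c 1 = b := by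
  simp [genCT]

/-- Q1: the generalized Motzkin recurrence. -/
theorem q1 (b c : ℝ) (n : ℕ) :
    genMotzkin b c (n+1)
      = b * genMotzkin b c n
        + c * ∑ i ∈ range n, genMotzkin b c i * genMotzkin b c (n-1-i) := by
  rcases n with _ | m
  · rw [mot_one, mot_zero]; simp
  · have hsum : ∑ i ∈ range (m+1), genMotzkin b c i * genMotzkin b c (m+1-1-i)
        = ∑ i ∈ range (m+1),
            (∑ p ∈ range (i/2+1), (i.choose (2*p) : ℝ) * (catalan p : ℝ) * b^(i-2*p) * c^p) *
            (∑ q ∈ range ((m-i)/2+1),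
              ((m-i).choose (2*q) : ℝ) * (catalan q : ℝ) * b^(m-i-2*q) * c^q) := by
      refine Finset.sum_congr rfl fun i hi => ?_
      rw [show m+1-1-i = m-i by omega, genMotzkin_shape, genMotzkin_shape]
    rw [hsum, genMotzkin_shape b c (m+2), genMotzkin_shape b c (m+1)]
    have := key_step b c (fun p => (catalan p : ℝ)) (fun s => (catalan (s+1) : ℝ)) 1
      (fun s => cat_conv s) (fun j => (one_mul _).symm) m
    rw [this]
    ring

/-- Q2: the generalized central trinomial recurrence. -/
theorem q2 (b c : ℝ) (n : ℕ) :
    genCT b c (n+1)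
      = b * genCT b c n
        + 2 * c * ∑ i ∈ range n, genMotzkin b c i * genCT b c (n-1-i) := by
  rcases n with _ | m
  · rw [ct_one, ct_zero]; simp
  · have hsum : ∑ i ∈ range (m+1), genMotzkin b c i * genCT b c (m+1-1-i)
        = ∑ i ∈ range (m+1),
            (∑ p ∈ range (i/2+1), (i.choose (2*p) : ℝ) * (catalan p : ℝ) * b^(i-2*p) * c^p) *
            (∑ q ∈ range ((m-i)/2+1),
              ((m-i).choose (2*q) : ℝ) * (Nat.centralBinom q : ℝ) * b^(m-i-2*q) * c^q) := by
      refine Finset.sum_congr rfl fun i hi => ?_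
      rw [show m+1-1-i = m-i by omega, genMotzkin_shape, genCT_shape]
    rw [hsum, genCT_shape b c (m+2), genCT_shape b c (m+1)]
    have := key_step b c (fun p => (Nat.centralBinom p : ℝ))
      (fun s => (2*(s:ℝ)+1) * (catalan s : ℝ)) 2
      (fun s => star s) (fun j => by rw [cB_eq j]; ring) m
    rw [this]


section Series
variable (b c : ℝ)

local notation "PM" => PowerSeries.mk (genMotzkin b c)
local notation "PS" => PowerSeries.mk (genCT b c)
local notation "CC" => PowerSeries.C (R := ℝ)

theorem coeff_sq (f g : ℕ → ℝ) (t : ℕ) :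
    (PowerSeries.coeff (R := ℝ) t) (PowerSeries.mk f * PowerSeries.mk g)
      = ∑ i ∈ range (t+1), f i * g (t - i) := by
  rw [PowerSeries.coeff_mul, Finset.Nat.sum_antidiagonal_eq_sum_range_succ_mk]
  simp [PowerSeries.coeff_mk]

theorem Q1s : (PM : ℝ⟦X⟧) = 1 + CC b * (X * PM) + CC c * (X * (X * (PM * PM))) := by
  ext n
  rw [map_add, map_add, PowerSeries.coeff_C_mul, PowerSeries.coeff_C_mul, PowerSeries.coeff_mk]
  rcases n with _ | t
  · rw [PowerSeries.coeff_zero_eq_constantCoeff]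
    simp [mot_zero]
  · rw [PowerSeries.coeff_one, if_neg (Nat.succ_ne_zero t),
      PowerSeries.coeff_succ_X_mul, PowerSeries.coeff_succ_X_mul, PowerSeries.coeff_mk]
    rcases t with _ | u
    · rw [q1 b c 0]
      rw [PowerSeries.coeff_zero_eq_constantCoeff]
      simp
    · rw [PowerSeries.coeff_succ_X_mul, coeff_sq, q1 b c (u+1)]
      have : ∑ i ∈ range (u+1), genMotzkin b c i * genMotzkin b c (u+1-1-i)
          = ∑ i ∈ range (u+1), genMotzkin b c i * genMotzkin b c (u-i) := by
        refine Finset.sum_congr rfl fun i hi => ?_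
        rw [show u+1-1-i = u-i by omega]
      rw [this]
      ring

theorem Q2s : (PS : ℝ⟦X⟧) = 1 + CC b * (X * PS) + CC (2*c) * (X * (X * (PM * PS))) := by
  ext n
  rw [map_add, map_add, PowerSeries.coeff_C_mul, PowerSeries.coeff_C_mul, PowerSeries.coeff_mk]
  rcases n with _ | t
  · rw [PowerSeries.coeff_zero_eq_constantCoeff]
    simp [ct_zero]
  · rw [PowerSeries.coeff_one, if_neg (Nat.succ_ne_zero t),
      PowerSeries.coeff_succ_X_mul, PowerSeries.coeff_succ_X_mul, PowerSeries.coeff_mk]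
    rcases t with _ | u
    · rw [q2 b c 0]
      rw [PowerSeries.coeff_zero_eq_constantCoeff]
      simp
    · rw [PowerSeries.coeff_succ_X_mul, coeff_sq, q2 b c (u+1)]
      have : ∑ i ∈ range (u+1), genMotzkin b c i * genCT b c (u+1-1-i)
          = ∑ i ∈ range (u+1), genMotzkin b c i * genCT b c (u-i) := by
        refine Finset.sum_congr rfl fun i hi => ?_
        rw [show u+1-1-i = u-i by omega]
      rw [this]
      ring

theorem Rrec (k : ℕ) :
    (PS : ℝ⟦X⟧) * (X * PM)^(k+1)
      = X * (PS * (X * PM)^k) + CC b * (X * (PS * (X * PM)^(k+1)))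
        + CC c * (X * (PS * (X * PM)^(k+2))) := by
  linear_combination ((PS : ℝ⟦X⟧) * (X * PM)^k * X) * Q1s b c

theorem main_ind : ∀ n k : ℕ, genCTTriangle b c n k
    = (PowerSeries.coeff (R := ℝ) n) ((PS : ℝ⟦X⟧) * (X * PM)^k) := by
  intro n
  induction n using Nat.strong_induction_on with
  | _ n ih =>
    intro k
    rcases n with _ | t
    · rw [triangle_row0, PowerSeries.coeff_zero_eq_constantCoeff, map_mul, map_pow,
        map_mul, constantCoeff_X, zero_mul, PowerSeries.constantCoeff_mk, ct_zero]
      rcases k with _ | s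
      · simp
      · simp [zero_pow (Nat.succ_ne_zero s)]
    · rcases k with _ | s
      · rw [TL2, ih t (by omega) 0, ih t (by omega) 1]
        have h0 : ((PS : ℝ⟦X⟧) * (X * PM)^0) = PS := by rw [pow_zero, mul_one]
        have h1 : ((PS : ℝ⟦X⟧) * (X * PM)^1) = X * (PM * PS) := by ring
        rw [h0, h1]
        nth_rewrite 3 [Q2s b c]
        rw [map_add, map_add, PowerSeries.coeff_C_mul, PowerSeries.coeff_C_mul,
          PowerSeries.coeff_one, if_neg (Nat.succ_ne_zero t),
          PowerSeries.coeff_succ_X_mul, PowerSeries.coeff_succ_X_mul]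
        ring
      · rw [TL1, ih t (by omega) s, ih t (by omega) (s+1), ih t (by omega) (s+2)]
        rw [show (PowerSeries.coeff (R := ℝ) (t+1)) ((PS : ℝ⟦X⟧) * (X * PM)^(s+1))
            = (PowerSeries.coeff (R := ℝ) (t+1)) (X * (PS * (X * PM)^s)
              + CC b * (X * (PS * (X * PM)^(s+1))) + CC c * (X * (PS * (X * PM)^(s+2))))
          from congrArg _ (Rrec b c s)]
        rw [map_add, map_add, PowerSeries.coeff_C_mul, PowerSeries.coeff_C_mul,
          PowerSeries.coeff_succ_X_mul, PowerSeries.coeff_succ_X_mul,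
          PowerSeries.coeff_succ_X_mul]

end Series

/-- the triangle `[T_{n,k}(b,c)]` is the Riordan array `(S(x), M(x))`:
for every `k`, the generating function of its `k`-th column is
`Σ_{n≥0} T_{n,k}(b,c) x^n = S(x) (x M(x))^k`, where `S(x) = Σ T_n(b,c) x^n` and
`M(x) = Σ M_n(b,c) x^n`. -/
theorem genCTTriangle_riordan (b c : ℝ) (k : ℕ) :
    PowerSeries.mk (fun n => genCTTriangle b c n k) =
      PowerSeries.mk (genCT b c) *
        (PowerSeries.X * PowerSeries.mk (genMotzkin b c)) ^ k := by
  ext n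
  rw [PowerSeries.coeff_mk]
  exact main_ind b c n k
end
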